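/- arXiv:1703.09597 — 2 statements merged into one kernel-verified Lean document; each statement's English description precedes it below -/
import Mathlib

section
/- For every k ≥ 1, the derivation ε_{2k} of the free Lie algebra on {x,y}, defined by ε_{2k}(x) = ad(x)^{2k}(y) and ε_{2k}(y) = Σ_{0 ≤ j < k} (−1)^j [ad(x)^j(y), ad(x)^{2k−1−j}(y)], annihilates the element [x,y], i.e. ε_{2k}([x,y]) = 0. -/
/-!
Write `a n = ad(x)^n(y)`. By the Leibniz rule `[x, [a i, a j]] = [a (i+1), a j] + [a i, a (j+1)]`,
so the alternating sum `[x, ε(y)] = Σ_{j<k} (-1)^j [x, [a j, a (2k-1-j)]]` telescopes to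
`[a 0, a 2k] - (-1)^k [a k, a k] = [y, a 2k]`, which cancels `[ε(x), y] = [a 2k, y]`.
-/

open FreeLieAlgebra

/-- `adX n` is `ad(x)^n(y)` in the free Lie algebra on two generators `x = of 0`, `y = of 1`. -/
noncomputable def adX (n : ℕ) : FreeLieAlgebra ℚ (Fin 2) :=
  (fun z => ⁅of ℚ (0 : Fin 2), z⁆)^[n] (of ℚ (1 : Fin 2))

section IteratedLie

variable {R L : Type*} [CommRing R] [LieRing L] [LieAlgebra R L]

def iteratedLie (x y : L) (n : ℕ) : L :=
  (fun z => ⁅x, z⁆)^[n] y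

@[simp]
lemma iteratedLie_zero (x y : L) : iteratedLie x y 0 = y := rfl

lemma iteratedLie_succ (x y : L) (n : ℕ) :
    iteratedLie x y (n + 1) = ⁅x, iteratedLie x y n⁆ :=
  Function.iterate_succ_apply' _ _ _

lemma lie_lie_iteratedLie (x y : L) (i j : ℕ) :
    ⁅x, ⁅iteratedLie x y i, iteratedLie x y j⁆⁆ =
      ⁅iteratedLie x y (i + 1), iteratedLie x y j⁆ + ⁅iteratedLie x y i, iteratedLie x y (j + 1)⁆ := by
  rw [leibniz_lie, iteratedLie_succ, iteratedLie_succ]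

lemma lie_sum_alternating_iteratedLie (x y : L) {k n : ℕ} (hkn : k ≤ n) :
    ⁅x, ∑ j ∈ Finset.range k, (-1 : R) ^ j • ⁅iteratedLie x y j, iteratedLie x y (n - 1 - j)⁆⁆ =
      ⁅y, iteratedLie x y n⁆ - (-1 : R) ^ k • ⁅iteratedLie x y k, iteratedLie x y (n - k)⁆ := by
  let g : ℕ → L := fun j => (-1 : R) ^ j • ⁅iteratedLie x y j, iteratedLie x y (n - j)⁆
  have hstep : ∀ j ∈ Finset.range k,
      ⁅x, (-1 : R) ^ j • ⁅iteratedLie x y j, iteratedLie x y (n - 1 - j)⁆⁆ = g j - g (j + 1) := by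
    intro j hj
    have hjk := Finset.mem_range.mp hj
    have h₁ : n - 1 - j + 1 = n - j := by omega
    have h₂ : n - (j + 1) = n - 1 - j := by omega
    simp only [g, lie_smul, lie_lie_iteratedLie, h₁, h₂, pow_succ]
    module
  rw [lie_sum, Finset.sum_congr rfl hstep, Finset.sum_range_sub']
  simp [g]

theorem LieDerivation.apply_lie_eq_zero_of_apply_eq_iteratedLie
    (D : LieDerivation R L L) (x y : L) (k : ℕ)
    (hx : D x = iteratedLie x y (2 * k))
    (hy : D y = ∑ j ∈ Finset.range k,
      (-1 : R) ^ j • ⁅iteratedLie x y j, iteratedLie x y (2 * k - 1 - j)⁆) :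
    D ⁅x, y⁆ = 0 := by
  have hk : 2 * k - k = k := by omega
  rw [D.apply_lie_eq_add, hx, hy, lie_sum_alternating_iteratedLie x y (by omega : k ≤ 2 * k), hk,
    lie_self, smul_zero, sub_zero, ← lie_skew, neg_add_cancel]

end IteratedLie

theorem eps2k_annihilates_bracket_general (k : ℕ)
    (D : LieDerivation ℚ (FreeLieAlgebra ℚ (Fin 2)) (FreeLieAlgebra ℚ (Fin 2)))
    (hx : D (of ℚ (0 : Fin 2)) = adX (2 * k))
    (hy : D (of ℚ (1 : Fin 2)) =
      ∑ j ∈ Finset.range k, ((-1 : ℚ) ^ j) • ⁅adX j, adX (2 * k - 1 - j)⁆) :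
    D ⁅of ℚ (0 : Fin 2), of ℚ (1 : Fin 2)⁆ = 0 :=
  D.apply_lie_eq_zero_of_apply_eq_iteratedLie _ _ k hx hy

/-- for every k ≥ 1, the derivation ε_{2k} with
ε_{2k}(x) = ad(x)^{2k}(y) and ε_{2k}(y) = Σ_{0 ≤ j < k} (−1)^j [ad(x)^j(y), ad(x)^{2k−1−j}(y)]
annihilates [x,y]. -/
theorem eps2k_annihilates_bracket (k : ℕ) (hk : 1 ≤ k)
    (D : LieDerivation ℚ (FreeLieAlgebra ℚ (Fin 2)) (FreeLieAlgebra ℚ (Fin 2)))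
    (hx : D (of ℚ (0 : Fin 2)) = adX (2 * k))
    (hy : D (of ℚ (1 : Fin 2)) =
      ∑ j ∈ Finset.range k, ((-1 : ℚ) ^ j) • ⁅adX j, adX (2 * k - 1 - j)⁆) :
    D ⁅of ℚ (0 : Fin 2), of ℚ (1 : Fin 2)⁆ = 0 :=
  eps2k_annihilates_bracket_general k D hx hy
end

section
/- For every k ≥ 0, the derivations ε_{2k} and ε₂ of the free Lie algebra on {x,y} commute: [ε_{2k}, ε₂] = ε_{2k}∘ε₂ − ε₂∘ε_{2k} = 0. -/
/-!
`ε₂` is the inner derivation `z ↦ ⁅z, ⁅x, y⁆⁆`, so it suffices that `ε_{2k}` kills `⁅x, y⁆`.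
By Leibniz, `ε_{2k}⁅x, y⁆ = ⁅x, ε_{2k} y⁆ + ⁅ad(x)^{2k} y, y⁆`, and the alternating sum
defining `ε_{2k} y` is built so that `ad x` telescopes it to `⁅y, ad(x)^{2k} y⁆`.
-/

open FreeLieAlgebra

namespace FreeLieAlgebra

variable {R X : Type*} [CommRing R]

theorem lieSpan_range_of :
    LieSubalgebra.lieSpan R (FreeLieAlgebra R X) (Set.range (of R)) = ⊤ := by
  set S := LieSubalgebra.lieSpan R (FreeLieAlgebra R X) (Set.range (of R))
  let g : FreeLieAlgebra R X →ₗ⁅R⁆ S :=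
    lift R fun i => ⟨of R i, LieSubalgebra.subset_lieSpan ⟨i, rfl⟩⟩
  have hg : S.incl.comp g = LieHom.id := hom_ext fun i => by simp [g, lift_of_apply]
  rw [eq_top_iff]
  intro z _
  have hz : S.incl.comp g z ∈ S := (g z).2
  rwa [hg, LieHom.id_apply] at hz

theorem lieDerivation_ext {D₁ D₂ : LieDerivation R (FreeLieAlgebra R X) (FreeLieAlgebra R X)}
    (h : ∀ i, D₁ (of R i) = D₂ (of R i)) : D₁ = D₂ :=
  LieDerivation.ext_of_lieSpan_eq_top _ lieSpan_range_of (by rintro _ ⟨i, rfl⟩; exact h i)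

end FreeLieAlgebra

section

variable {R L : Type*} [CommRing R] [LieRing L] [LieAlgebra R L]

theorem LieDerivation.apply_lie_of_apply_eq_zero (D : LieDerivation R L L) {c : L}
    (hc : D c = 0) (z : L) : D ⁅z, c⁆ = ⁅D z, c⁆ := by
  rw [D.apply_lie_eq_add, hc, lie_zero, zero_add]

theorem LieDerivation.ad_neg_apply (c z : L) : LieDerivation.ad R L (-c) z = ⁅z, c⁆ := by
  rw [LieDerivation.ad_apply_apply, neg_lie, lie_skew]

/-- `ad x` telescopes the alternating sum: the `j`-th term contributes `t j - t (j + 1)` with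
`t j = (-1) ^ j • ⁅f j, f (2k - j)⁆`, and `t k = ⁅f k, f k⁆ = 0`. -/
theorem lie_sum_alternating_lie_eq (x : L) (f : ℕ → L) (hf : ∀ n, f (n + 1) = ⁅x, f n⁆)
    (k : ℕ) :
    ⁅x, ∑ j ∈ Finset.range k, ((-1 : R) ^ j) • ⁅f j, f (2 * k - 1 - j)⁆⁆ = ⁅f 0, f (2 * k)⁆ := by
  set t : ℕ → L := fun j => ((-1 : R) ^ j) • ⁅f j, f (2 * k - j)⁆
  have hterm : ∀ j < k, ⁅x, ((-1 : R) ^ j) • ⁅f j, f (2 * k - 1 - j)⁆⁆ = t j - t (j + 1) := by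
    intro j hj
    have hsucc : 2 * k - j = 2 * k - 1 - j + 1 := by omega
    have hpred : 2 * k - (j + 1) = 2 * k - 1 - j := by omega
    simp only [t, lie_smul, leibniz_lie, ← hf, hsucc, hpred, pow_succ]
    module
  rw [lie_sum, Finset.sum_congr rfl fun j hj => hterm j (Finset.mem_range.mp hj),
    Finset.sum_range_sub']
  simp [t, show 2 * k - k = k by omega]

end

theorem adX_succ (n : ℕ) : adX (n + 1) = ⁅of ℚ (0 : Fin 2), adX n⁆ :=
  Function.iterate_succ_apply' _ n _

/-- for every k ≥ 0, the derivations ε_{2k} and ε₂ commute: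
ε_{2k}∘ε₂ − ε₂∘ε_{2k} = 0.  (The uniform formula for ε_{2k} specializes for k = 0
to ε₀(x) = y, ε₀(y) = 0.) -/
theorem eps2k_commutes_with_eps2 (k : ℕ)
    (D E : LieDerivation ℚ (FreeLieAlgebra ℚ (Fin 2)) (FreeLieAlgebra ℚ (Fin 2)))
    (hDx : D (of ℚ (0 : Fin 2)) = adX (2 * k))
    (hDy : D (of ℚ (1 : Fin 2)) =
      ∑ j ∈ Finset.range k, ((-1 : ℚ) ^ j) • ⁅adX j, adX (2 * k - 1 - j)⁆)
    (hEx : E (of ℚ (0 : Fin 2)) = ⁅of ℚ (0 : Fin 2), ⁅of ℚ (0 : Fin 2), of ℚ (1 : Fin 2)⁆⁆)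
    (hEy : E (of ℚ (1 : Fin 2)) = ⁅of ℚ (1 : Fin 2), ⁅of ℚ (0 : Fin 2), of ℚ (1 : Fin 2)⁆⁆) :
    ∀ z : FreeLieAlgebra ℚ (Fin 2), D (E z) - E (D z) = 0 := by
  set x := of ℚ (0 : Fin 2)
  set y := of ℚ (1 : Fin 2)
  have hE : E = LieDerivation.ad ℚ _ (-⁅x, y⁆) := lieDerivation_ext fun i => by
    fin_cases i
    · rw [LieDerivation.ad_neg_apply]; exact hEx
    · rw [LieDerivation.ad_neg_apply]; exact hEy
  have hDxy : D ⁅x, y⁆ = 0 := by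
    rw [D.apply_lie_eq_add, hDx, hDy, lie_sum_alternating_lie_eq x adX adX_succ k]
    exact add_eq_zero_iff_eq_neg.mpr (lie_skew _ _).symm
  intro z
  rw [hE, LieDerivation.ad_neg_apply, LieDerivation.ad_neg_apply,
    D.apply_lie_of_apply_eq_zero hDxy, sub_self]
end
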